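/- Let ψ₁,...,ψ_K : [0,1] → R be linearly independent continuous functions and let A ∈ R^{p_1 × ... × p_D × K} satisfy Σ_{j ∈ J} Σ_{k=1}^K A_{j,k} ψ_k(X_j) = 0 for all X ∈ [0,1]^{p_1 × ... × p_D}, where additionally Σ_k A_{j,k} w_k = 0 for every multi-index j, with w_k = ∫_0^1 ψ_k(x) dx. Then A = 0. -/

import Mathlib

/- If `∑ⱼ fⱼ(Xⱼ)` vanishes on `sᴶ`, moving a single coordinate `X_{j₀}` inside `s` leaves the
other summands unchanged, so `f_{j₀}` is constant on `s`.  For `f_{j₀} = ∑ₖ A_{j₀,k} ψₖ` that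
constant is its integral over `[0,1]`, which the mean-zero constraint makes `0`; linear
independence of the `ψₖ` on `[0,1]` then forces `A_{j₀,·} = 0`. -/

open Finset

theorem apply_eq_apply_of_sum_apply_eq_zero {ι α M : Type*} [Fintype ι]
    [AddCancelCommMonoid M] {s : Set α} {f : ι → α → M}
    (h : ∀ X : ι → α, (∀ j, X j ∈ s) → ∑ j, f j (X j) = 0)
    (j₀ : ι) {x y : α} (hx : x ∈ s) (hy : y ∈ s) : f j₀ x = f j₀ y := by
  classical
  have hsum_update : ∀ z ∈ s,
      f j₀ z + ∑ j ∈ univ \ {j₀}, f j x = 0 := by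
    intro z hz
    have hX : ∀ j, Function.update (fun _ => x) j₀ z j ∈ s := by
      intro j
      rcases eq_or_ne j j₀ with rfl | hj
      · simpa using hz
      · simpa [hj] using hx
    simpa only [Function.apply_update (fun j => f j), sum_update_of_mem (mem_univ j₀)]
      using h _ hX
  exact add_right_cancel ((hsum_update x hx).trans (hsum_update y hy).symm)

theorem eqOn_zero_of_const_of_intervalIntegral_eq_zero {f : ℝ → ℝ} {a b : ℝ}
    (hab : a < b) (hconst : ∀ x ∈ Set.Icc a b, ∀ y ∈ Set.Icc a b, f x = f y)
    (hint : ∫ x in a..b, f x = 0) : Set.EqOn f 0 (Set.Icc a b) := by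
  intro x hx
  have hf : ∫ t in a..b, f t = ∫ _ in a..b, f x := by
    refine intervalIntegral.integral_congr fun t ht => ?_
    rw [Set.uIcc_of_le hab.le] at ht
    exact hconst t ht x hx
  rw [hf, intervalIntegral.integral_const, smul_eq_mul] at hint
  exact (mul_eq_zero.mp hint).resolve_left (sub_ne_zero.mpr hab.ne')

theorem LinearIndependent.eq_zero_of_sum_smul_eqOn_zero {ι α R M : Type*} [Fintype ι]
    [Ring R] [AddCommGroup M] [Module R M] {s : Set α} {f : ι → α → M}
    (hf : LinearIndependent R fun k => s.domRestrict (f k)) {c : ι → R}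
    (hc : Set.EqOn (fun x => ∑ k, c k • f k x) 0 s) : c = 0 := by
  funext k
  refine Fintype.linearIndependent_iff.mp hf c ?_ k
  funext x
  simpa using hc x.2

/-- If `ψ₁,…,ψ_K` are linearly independent continuous functions on `[0,1]`,
and `A` satisfies `Σ_j Σ_k A_{j,k} ψ_k(X_j) = 0` for all `X` in the cube
together with the mean-zero constraint `Σ_k A_{j,k} w_k = 0`
(`w_k = ∫₀¹ ψ_k`) for every multi-index `j`, then `A = 0`. -/
theorem broadcast_linear_independence_zero
    (D K : ℕ) (p : Fin D → ℕ)
    (ψ : Fin K → ℝ → ℝ)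
    (hψc : ∀ k, Continuous (ψ k))
    (hψli : LinearIndependent ℝ (fun k : Fin K =>
      (Set.Icc (0:ℝ) 1).restrict (ψ k)))
    (A : ((d : Fin D) → Fin (p d)) → Fin K → ℝ)
    (hzero : ∀ X : ((d : Fin D) → Fin (p d)) → ℝ,
      (∀ j, X j ∈ Set.Icc (0:ℝ) 1) →
      ∑ j, ∑ k, A j k * ψ k (X j) = 0)
    (hmean : ∀ j, ∑ k, A j k * (∫ x in (0:ℝ)..1, ψ k x) = 0) :
    A = 0 := by
  funext j₀
  have hconst : ∀ x ∈ Set.Icc (0:ℝ) 1, ∀ y ∈ Set.Icc (0:ℝ) 1,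
      ∑ k, A j₀ k * ψ k x = ∑ k, A j₀ k * ψ k y := fun x hx y hy =>
    apply_eq_apply_of_sum_apply_eq_zero (f := fun j t => ∑ k, A j k * ψ k t) hzero j₀ hx hy
  have hint : ∫ x in (0:ℝ)..1, ∑ k, A j₀ k * ψ k x = 0 := by
    rw [intervalIntegral.integral_finsetSum fun k _ =>
      ((hψc k).intervalIntegrable 0 1).const_mul (A j₀ k)]
    simpa only [intervalIntegral.integral_const_mul] using hmean j₀
  exact hψli.eq_zero_of_sum_smul_eqOn_zero
    (eqOn_zero_of_const_of_intervalIntegral_eq_zero zero_lt_one hconst hint)
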